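/- Let λ ≠ 0 and -1 < w < 1 be real constants, and consider the quintessence system x' = -(3/2)[2x + (w-1)x³ + x(w+1)(y²-1) - √(2/3)λy²], y' = -(3/2)y[(w-1)x² + (w+1)(y²-1) + √(2/3)λx]. The scaling point B = (√(3/2)(1+w)/λ, √(3(1-w²))/(√2 λ)) is a zero of the vector field, and the characteristic polynomial of the Jacobian matrix at B is μ² - (3/2)(w-1)μ + (9(1-w²)/(2λ²))(λ² - 3(1+w)); equivalently its eigenvalues are (3/(4λ))[(w-1)λ ± √((w-1)((7+9w)λ² - 24(w+1)²))]. Consequently both eigenvalues have negative real part if and only if λ² > 3(1+w), in which case B is a hyperbolic sink. -/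

import Mathlib

open Polynomial

/-!
Put `k = √(2/3) λ`. Then `B = ((1 + w) / k, r / k)` with `r = √(1 - w²)`, and in these
coordinates the vanishing of the vector field, the trace `3(w - 1)/2` of the Jacobian and its
determinant `9(1 - w²)(k² - 2(1 + w)) / (2k²)` are polynomial identities modulo `r² = 1 - w²`.
Stability is then the Routh–Hurwitz criterion for a real monic quadratic `μ² + bμ + c`: all its
complex roots have negative real part iff `b > 0` and `c > 0`. Here `b = 3(1 - w)/2 > 0`, and
`c` has the sign of `λ² - 3(1 + w)` since `1 - w² > 0`.
-/

/-- `x`-component of the quintessence (exponential potential) vector field. -/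
noncomputable def q6x (w lam x y : ℝ) : ℝ :=
  -(3 / 2) * (2 * x + (w - 1) * x ^ 3 + x * (w + 1) * (y ^ 2 - 1)
    - Real.sqrt (2 / 3) * lam * y ^ 2)

/-- `y`-component of the quintessence (exponential potential) vector field. -/
noncomputable def q6y (w lam x y : ℝ) : ℝ :=
  -(3 / 2) * y * ((w - 1) * x ^ 2 + (w + 1) * (y ^ 2 - 1) + Real.sqrt (2 / 3) * lam * x)

/-- The scaling critical point `B`. -/
noncomputable def B6 (w lam : ℝ) : ℝ × ℝ :=
  (Real.sqrt (3 / 2) * (1 + w) / lam, Real.sqrt (3 * (1 - w ^ 2)) / (Real.sqrt 2 * lam))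

/-- Jacobian matrix of the quintessence vector field at a point `p`. -/
noncomputable def jac6 (w lam : ℝ) (p : ℝ × ℝ) : Matrix (Fin 2) (Fin 2) ℝ :=
  !![deriv (fun x => q6x w lam x p.2) p.1, deriv (fun y => q6x w lam p.1 y) p.2;
     deriv (fun x => q6y w lam x p.2) p.1, deriv (fun y => q6y w lam p.1 y) p.2]

theorem quadratic_roots_re_neg_iff (b c : ℝ) :
    (∀ μ : ℂ, μ ^ 2 + b * μ + c = 0 → μ.re < 0) ↔ 0 < b ∧ 0 < c := by
  constructor
  · intro h
    -- The roots `(-b ± s) / 2` have real parts summing to `-b`, and `|Re s| < b` together with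
    -- `Re (s ^ 2) = b ^ 2 - 4 c` forces `c > 0`.
    obtain ⟨s, hs⟩ := IsAlgClosed.exists_eq_mul_self ((b : ℂ) ^ 2 - 4 * c)
    have hroot (μ : ℂ) (hμ : (2 * μ + b) ^ 2 = s * s) : μ.re < 0 :=
      h μ (by linear_combination (hμ - hs) / 4)
    have hplus : (s.re - b) / 2 < 0 := by simpa using hroot ((s - b) / 2) (by ring)
    have hminus : (-s.re - b) / 2 < 0 := by simpa using hroot ((-s - b) / 2) (by ring)
    have hdisc : b ^ 2 - 4 * c = s.re ^ 2 - s.im ^ 2 := by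
      simpa [sq] using congrArg Complex.re hs
    exact ⟨by linarith, by nlinarith [sq_nonneg s.im]⟩
  · rintro ⟨hb, hc⟩ μ hμ
    have hre : μ.re ^ 2 - μ.im ^ 2 + b * μ.re + c = 0 := by
      simpa [sq] using congrArg Complex.re hμ
    have him : μ.re * μ.im + μ.im * μ.re + b * μ.im = 0 := by
      simpa [sq] using congrArg Complex.im hμ
    by_contra! hre_nonneg
    have him0 : μ.im = 0 := by
      refine (mul_eq_zero.mp (?_ : μ.im * (2 * μ.re + b) = 0)).resolve_right (by linarith)
      linear_combination him
    rw [him0] at hre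
    nlinarith

theorem jac6_eq (w lam : ℝ) (p : ℝ × ℝ) :
    jac6 w lam p =
      !![-(3 / 2) * (2 + 3 * (w - 1) * p.1 ^ 2 + (w + 1) * (p.2 ^ 2 - 1)),
          -3 * p.2 * ((w + 1) * p.1 - Real.sqrt (2 / 3) * lam);
         -(3 / 2) * p.2 * (2 * (w - 1) * p.1 + Real.sqrt (2 / 3) * lam),
          -(3 / 2) * ((w - 1) * p.1 ^ 2 + (w + 1) * (3 * p.2 ^ 2 - 1)
            + Real.sqrt (2 / 3) * lam * p.1)] := by
  ext i j
  fin_cases i <;> fin_cases j <;> simp (disch := fun_prop) [jac6, q6x, q6y] <;> grind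

theorem B6_eq (w lam : ℝ) :
    B6 w lam = ((1 + w) / (Real.sqrt (2 / 3) * lam),
      Real.sqrt (1 - w ^ 2) / (Real.sqrt (2 / 3) * lam)) := by
  rw [B6, Real.sqrt_mul (by norm_num : (0 : ℝ) ≤ 3), Real.sqrt_div' _ (by norm_num : (0 : ℝ) ≤ 3),
    Real.sqrt_div' _ (by norm_num : (0 : ℝ) ≤ 2)]
  ext <;> field_simp

section ScalingPoint

variable {w lam k r : ℝ}

theorem q6x_scaling_point (hk : Real.sqrt (2 / 3) * lam = k) (hk0 : k ≠ 0)
    (hr : r ^ 2 = 1 - w ^ 2) : q6x w lam ((1 + w) / k) (r / k) = 0 := by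
  rw [q6x, hk]
  field_simp
  linear_combination 3 * (k ^ 2 - (1 + w) ^ 2) * hr

theorem q6y_scaling_point (hk : Real.sqrt (2 / 3) * lam = k) (hk0 : k ≠ 0)
    (hr : r ^ 2 = 1 - w ^ 2) : q6y w lam ((1 + w) / k) (r / k) = 0 := by
  rw [q6y, hk]
  field_simp
  linear_combination -3 * (1 + w) * r * hr

theorem trace_jac6_scaling_point (hk : Real.sqrt (2 / 3) * lam = k) (hk0 : k ≠ 0)
    (hr : r ^ 2 = 1 - w ^ 2) : (jac6 w lam ((1 + w) / k, r / k)).trace = 3 / 2 * (w - 1) := by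
  rw [jac6_eq, Matrix.trace_fin_two_of, hk]
  field_simp
  linear_combination -4 * (1 + w) * hr

theorem det_jac6_scaling_point (hk : Real.sqrt (2 / 3) * lam = k) (hk0 : k ≠ 0)
    (hr : r ^ 2 = 1 - w ^ 2) :
    (jac6 w lam ((1 + w) / k, r / k)).det
      = 9 * (1 - w ^ 2) * (k ^ 2 - 2 * (1 + w)) / (2 * k ^ 2) := by
  rw [jac6_eq, Matrix.det_fin_two_of, hk]
  field_simp
  grind

end ScalingPoint

/-- The scaling point `B` is a fixed point of the quintessence system; the characteristic
polynomial of its Jacobian is `μ² - (3/2)(w-1)μ + (9(1-w²)/(2λ²))(λ²-3(1+w))`, and both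
eigenvalues have negative real part iff `λ² > 3(1+w)` (hyperbolic sink). -/
theorem quintessence_point_B_stability (w lam : ℝ) (hlam : lam ≠ 0)
    (hw1 : -1 < w) (hw2 : w < 1) :
    (q6x w lam (B6 w lam).1 (B6 w lam).2 = 0 ∧ q6y w lam (B6 w lam).1 (B6 w lam).2 = 0) ∧
    (jac6 w lam (B6 w lam)).charpoly
      = X ^ 2 - C (3 / 2 * (w - 1)) * X
          + C (9 * (1 - w ^ 2) / (2 * lam ^ 2) * (lam ^ 2 - 3 * (1 + w))) ∧
    ((∀ μ : ℂ,
        μ ^ 2 - 3 / 2 * ((w : ℂ) - 1) * μ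
            + 9 * (1 - (w : ℂ) ^ 2) / (2 * (lam : ℂ) ^ 2) * ((lam : ℂ) ^ 2 - 3 * (1 + (w : ℂ)))
          = 0 → μ.re < 0) ↔ 3 * (1 + w) < lam ^ 2) := by
  have hk0 : Real.sqrt (2 / 3) * lam ≠ 0 := by positivity
  have hr : Real.sqrt (1 - w ^ 2) ^ 2 = 1 - w ^ 2 := Real.sq_sqrt (by nlinarith)
  rw [B6_eq]
  refine ⟨⟨q6x_scaling_point rfl hk0 hr, q6y_scaling_point rfl hk0 hr⟩, ?_, ?_⟩
  · rw [Matrix.charpoly_fin_two, trace_jac6_scaling_point rfl hk0 hr,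
      det_jac6_scaling_point rfl hk0 hr]
    congr 3
    field_simp
    rw [Real.sq_sqrt (by norm_num : (0 : ℝ) ≤ 2 / 3)]
    ring
  · have hquad (μ : ℂ) : μ ^ 2 - 3 / 2 * ((w : ℂ) - 1) * μ
        + 9 * (1 - (w : ℂ) ^ 2) / (2 * (lam : ℂ) ^ 2) * ((lam : ℂ) ^ 2 - 3 * (1 + (w : ℂ)))
        = μ ^ 2 + ((3 / 2 * (1 - w) : ℝ) : ℂ) * μ
          + ((9 * (1 - w ^ 2) / (2 * lam ^ 2) * (lam ^ 2 - 3 * (1 + w)) : ℝ) : ℂ) := by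
      push_cast
      ring
    have hK : 0 < 9 * (1 - w ^ 2) / (2 * lam ^ 2) := by
      have : 0 < 1 - w ^ 2 := by nlinarith
      positivity
    simp only [hquad, quadratic_roots_re_neg_iff, mul_pos_iff_of_pos_left hK, sub_pos]
    exact and_iff_right (by linarith)
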